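/- Chebyshev's inequality for tensors: Let A be a deterministic positive definite d×d complex matrix and let X be a random Hermitian d×d matrix such that X² has integrable entries. Then ℙ(X ⋠ A) ≤ Tr(𝔼[X²]·A^{−2}). -/

import Mathlib

open MeasureTheory
open scoped ComplexOrder

noncomputable section

/-- `d × d` complex matrices: the model for square tensors
`ℂ^{I_1×⋯×I_N×I_1×⋯×I_N}` under the Einstein product, with `d = ∏ I_j`. -/
abbrev Mat (d : ℕ) := Matrix (Fin d) (Fin d) ℂ

/-- Continuous functional calculus: apply `f : ℝ → ℝ` to the eigenvalues of a
(Hermitian) matrix. -/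
noncomputable def mfun {d : ℕ} (f : ℝ → ℝ) (A : Mat d) : Mat d := cfc f A

/-- Real matrix power `A^r` via the continuous functional calculus. -/
noncomputable def mpow {d : ℕ} (A : Mat d) (r : ℝ) : Mat d :=
  cfc (fun x : ℝ => x ^ r) A

/-- The positive semidefinite absolute value `|A| = (A²)^{1/2}` of a Hermitian
matrix, obtained by applying `|·|` to the eigenvalues. -/
noncomputable def matAbs {d : ℕ} (A : Mat d) : Mat d := mfun (fun x => |x|) A

/-- Largest eigenvalue of a Hermitian matrix (junk value `0` otherwise). -/
noncomputable def eigMax {d : ℕ} (A : Mat d) : ℝ :=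
  if h : A.IsHermitian then ⨆ i, h.eigenvalues i else 0

/-- Smallest eigenvalue of a Hermitian matrix (junk value `0` otherwise). -/
noncomputable def eigMin {d : ℕ} (A : Mat d) : ℝ :=
  if h : A.IsHermitian then ⨅ i, h.eigenvalues i else 0

/-- The `i`-th largest eigenvalue (`0`-indexed, so `eigDesc A 0 = λ₁(A)` is the
largest) of a Hermitian matrix; junk value `0` otherwise. -/
noncomputable def eigDesc {d : ℕ} (A : Mat d) (i : ℕ) : ℝ :=
  if h : i < d ∧ A.IsHermitian then
    (h.2.eigenvalues ∘ Tuple.sort h.2.eigenvalues) (Fin.rev ⟨i, h.1⟩) else 0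

/-- Operator perspective `X #_f Y = X^{1/2} · f(X^{-1/2} Y X^{-1/2}) · X^{1/2}`. -/
noncomputable def persp {d : ℕ} (f : ℝ → ℝ) (X Y : Mat d) : Mat d :=
  mpow X (1/2) * mfun f (mpow X (-(1/2)) * Y * mpow X (-(1/2))) * mpow X (1/2)

/-- `TMI¹` : positive continuous functions on `(0,∞)` with `f 1 = 1` that are
tensor (matrix, in dimension `d`) monotone increasing. -/
def TMI1 (d : ℕ) (f : ℝ → ℝ) : Prop :=
  ContinuousOn f (Set.Ioi 0) ∧ (∀ x > 0, 0 < f x) ∧ f 1 = 1 ∧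
    ∀ A B : Mat d, A.PosDef → B.PosDef → (A - B).PosSemidef →
      (mfun f A - mfun f B).PosSemidef

/-- `TMD¹` : positive continuous functions on `(0,∞)` with `h 1 = 1` that are
tensor (matrix, in dimension `d`) monotone decreasing. -/
def TMD1 (d : ℕ) (h : ℝ → ℝ) : Prop :=
  ContinuousOn h (Set.Ioi 0) ∧ (∀ x > 0, 0 < h x) ∧ h 1 = 1 ∧
    ∀ A B : Mat d, A.PosDef → B.PosDef → (A - B).PosSemidef →
      (mfun h B - mfun h A).PosSemidef

/-- `TC¹` : positive continuous functions on `(0,∞)` with `g 1 = 1` that are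
tensor (matrix, in dimension `d`) convex. -/
def TC1 (d : ℕ) (g : ℝ → ℝ) : Prop :=
  ContinuousOn g (Set.Ioi 0) ∧ (∀ x > 0, 0 < g x) ∧ g 1 = 1 ∧
    ∀ A B : Mat d, A.PosDef → B.PosDef → ∀ t : ℝ, 0 ≤ t → t ≤ 1 →
      ((t • mfun g A + (1 - t) • mfun g B) - mfun g (t • A + (1 - t) • B)).PosSemidef

/-- `Z_j := X^{-2^{j-1}} · Y^{2^j} · X^{-2^{j-1}}` (so `Z_0 = X^{-1/2} Y X^{-1/2}`);
this is `Z_{k-1}` of the paper for `k = j+1`. -/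
noncomputable def Zmat {d : ℕ} (X Y : Mat d) (j : ℕ) : Mat d :=
  mpow X (-((2 : ℝ) ^ ((j : ℝ) - 1))) * mpow Y ((2 : ℝ) ^ (j : ℝ)) *
    mpow X (-((2 : ℝ) ^ ((j : ℝ) - 1)))

/-- `Ψ_lower(q,f,X,Y)` for `q = 2ⁿ·q₀`. -/
noncomputable def PsiLower {d : ℕ} (q0 : ℝ) (n : ℕ) (f : ℝ → ℝ) (X Y : Mat d) : ℝ :=
  eigMin (mpow (mfun f (Zmat X Y n)) (-q0) * mfun f (mpow (Zmat X Y n) q0)) *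
    ∏ k ∈ Finset.range n,
      eigMin (mpow (mfun f (Zmat X Y k)) (-2) * mfun f (mpow (Zmat X Y k) 2))

/-- `Ψ_upper(q,f,X,Y)` for `q = 2ⁿ·q₀`. -/
noncomputable def PsiUpper {d : ℕ} (q0 : ℝ) (n : ℕ) (f : ℝ → ℝ) (X Y : Mat d) : ℝ :=
  eigMax (mpow (mfun f (Zmat X Y n)) (-q0) * mfun f (mpow (Zmat X Y n) q0)) *
    ∏ k ∈ Finset.range n,
      eigMax (mpow (mfun f (Zmat X Y k)) (-2) * mfun f (mpow (Zmat X Y k) 2))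

/-- The Kantorovich constant `K(m, M, p)`. -/
noncomputable def Kconst (m M p : ℝ) : ℝ :=
  ((p - 1) * (M ^ p - m ^ p) / (p * (m * M ^ p - M * m ^ p))) ^ p *
    (m * M ^ p - M * m ^ p) / ((p - 1) * (M - m))

/-- The Kantorovich constant, interpreted as `1` when `p = 1` or `m = M`. -/
noncomputable def Kc (m M p : ℝ) : ℝ := if p = 1 ∨ m = M then 1 else Kconst m M p

/-- `ψ(q, f, Z) = max( f(λ_min(Z)^q)/f(λ_min(Z))^q , f(λ_max(Z)^q)/f(λ_max(Z))^q )`. -/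
noncomputable def psiRatio {d : ℕ} (q : ℝ) (f : ℝ → ℝ) (Z : Mat d) : ℝ :=
  max (f (eigMin Z ^ q) / f (eigMin Z) ^ q) (f (eigMax Z ^ q) / f (eigMax Z) ^ q)

/-- Entrywise expectation of a random matrix. -/
noncomputable def Emat {d : ℕ} {Ω : Type*} [MeasurableSpace Ω] (μ : Measure Ω)
    (X : Ω → Mat d) : Mat d := fun i j => ∫ ω, X ω i j ∂μ

/-! Conjugating by `A^{-1/2}` reduces `X ⋠ A` to `M ⋠ 1` for the Hermitian matrix
`M = A^{-1/2} X A^{-1/2}`. Then `M` has an eigenvalue `> 1`, so `1 < Tr(M²)`, and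
`Tr(M²) = Tr(X A⁻¹ X A⁻¹) ≤ Tr(X² A⁻²)` because `Tr([X, A⁻¹]ᴴ [X, A⁻¹]) ≥ 0`. Hence the
indicator of `{X ⋠ A}` is bounded by the nonnegative random variable `Tr(X² A⁻²)`, and
Markov's inequality gives the claim. -/

open Matrix

namespace Matrix

lemma trace_mul_eq_sum {n R : Type*} [Fintype n] [NonUnitalNonAssocSemiring R]
    (Y B : Matrix n n R) : (Y * B).trace = ∑ i, ∑ j, Y i j * B j i := by
  simp [trace, mul_apply]

variable {n 𝕜 : Type*} [Fintype n] [DecidableEq n] [RCLike 𝕜] {M : Matrix n n 𝕜}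

lemma IsHermitian.trace_mul_self (hM : M.IsHermitian) :
    (M * M).trace = ((∑ i, hM.eigenvalues i ^ 2 : ℝ) : 𝕜) := by
  set U := hM.eigenvectorUnitary
  set D : Matrix n n 𝕜 := diagonal (RCLike.ofReal ∘ hM.eigenvalues)
  calc (M * M).trace = ((U : Matrix n n 𝕜) * (D * D) * star (U : Matrix n n 𝕜)).trace := by
        conv_lhs => rw [hM.spectral_theorem, ← map_mul, Unitary.conjStarAlgAut_apply]
    _ = (D * D).trace := by
        rw [trace_mul_cycle, Unitary.coe_star_mul_self, one_mul]
    _ = _ := by simp [D, diagonal_mul_diagonal, trace_diagonal, sq]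

lemma IsHermitian.re_trace_mul_self_nonneg (hM : M.IsHermitian) :
    0 ≤ RCLike.re (M * M).trace := by
  rw [hM.trace_mul_self, RCLike.ofReal_re]
  positivity

lemma IsHermitian.one_lt_re_trace_mul_self (hM : M.IsHermitian) (h : ¬ (1 - M).PosSemidef) :
    1 < RCLike.re (M * M).trace := by
  open scoped MatrixOrder in
  obtain ⟨i, hi⟩ : ∃ i, 1 < hM.eigenvalues i := by
    have : ¬ M ≤ 1 := h
    rw [CFC.le_one_iff (R := ℝ) M hM.isSelfAdjoint, hM.spectrum_real_eq_range_eigenvalues] at this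
    push Not at this
    obtain ⟨_, ⟨i, rfl⟩, hi⟩ := this
    exact ⟨i, hi⟩
  rw [hM.trace_mul_self, RCLike.ofReal_re]
  calc 1 < hM.eigenvalues i ^ 2 := by nlinarith
    _ ≤ ∑ j, hM.eigenvalues j ^ 2 :=
      Finset.single_le_sum (fun j _ ↦ sq_nonneg (hM.eigenvalues j)) (Finset.mem_univ i)

lemma re_trace_mul_mul_mul_le {X P : Matrix n n 𝕜} (hX : X.IsHermitian) (hP : P.IsHermitian) :
    RCLike.re (X * P * X * P).trace ≤ RCLike.re (X * X * P * P).trace := by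
  set C := X * P - P * X
  have hC : (Cᴴ * C).trace = 2 * (X * X * P * P).trace - 2 * (X * P * X * P).trace := by
    have hexpand : Cᴴ * C = P * X * X * P + X * P * P * X - P * X * P * X - X * P * X * P := by
      simp only [C, conjTranspose_sub, conjTranspose_mul, hX.eq, hP.eq]
      noncomm_ring
    have h₁ : (P * X * X * P).trace = (X * X * P * P).trace := by
      simpa only [mul_assoc] using trace_mul_comm P (X * X * P)
    have h₂ : (X * P * P * X).trace = (X * X * P * P).trace := by
      rw [trace_mul_comm]
      simp only [mul_assoc]
    have h₃ : (P * X * P * X).trace = (X * P * X * P).trace := by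
      simpa only [mul_assoc] using trace_mul_comm P (X * P * X)
    rw [hexpand, trace_sub, trace_sub, trace_add, h₁, h₂, h₃]
    ring
  have h := (RCLike.nonneg_iff.mp (posSemidef_conjTranspose_mul_self C).trace_nonneg).1
  rw [hC] at h
  simpa only [map_sub, RCLike.mul_re, RCLike.ofNat_re, RCLike.ofNat_im, zero_mul, sub_zero,
    sub_nonneg, Nat.ofNat_pos, mul_le_mul_iff_right₀] using h

lemma re_trace_conj_mul_self_le {X T : Matrix n n 𝕜} (hX : X.IsHermitian) (hT : T.IsHermitian) :
    RCLike.re (T * X * T * (T * X * T)).trace ≤ RCLike.re (X * X * (T * T * (T * T))).trace :=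
  calc RCLike.re (T * X * T * (T * X * T)).trace
      = RCLike.re (X * (T * T) * X * (T * T)).trace := by
        rw [show T * X * T * (T * X * T) = T * (X * (T * T) * X * T) by simp only [mul_assoc],
          trace_mul_comm]
        simp only [mul_assoc]
    _ ≤ RCLike.re (X * X * (T * T) * (T * T)).trace :=
        re_trace_mul_mul_mul_le hX <| by
          simpa only [hT.eq] using isHermitian_mul_conjTranspose_self T
    _ = RCLike.re (X * X * (T * T * (T * T))).trace := by rw [mul_assoc (X * X)]

end Matrix

variable {d : ℕ} {A : Mat d}

lemma mpow_isHermitian (A : Mat d) (r : ℝ) : (mpow A r).IsHermitian :=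
  IsSelfAdjoint.cfc

lemma Matrix.IsHermitian.mpow_zero (hA : A.IsHermitian) : mpow A 0 = 1 := by
  simp only [mpow, Real.rpow_zero]
  exact cfc_const_one ℝ A hA.isSelfAdjoint

lemma Matrix.PosDef.mpow_one (hA : A.PosDef) : mpow A 1 = A := by
  simp only [mpow, Real.rpow_one]
  exact cfc_id' ℝ A hA.1.isSelfAdjoint

lemma Matrix.PosDef.mpow_add (hA : A.PosDef) (r s : ℝ) :
    mpow A (r + s) = mpow A r * mpow A s := by
  have hfin := A.finite_real_spectrum
  have hpos : ∀ x ∈ spectrum ℝ A, 0 < x := by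
    rw [hA.1.spectrum_real_eq_range_eigenvalues]
    rintro _ ⟨i, rfl⟩
    exact hA.eigenvalues_pos i
  rw [mpow, mpow, mpow, ← cfc_mul _ _ A (hfin.continuousOn _) (hfin.continuousOn _)]
  exact cfc_congr fun x hx ↦ Real.rpow_add (hpos x hx) r s

lemma Matrix.PosDef.mpow_conj_self (hA : A.PosDef) :
    mpow A (-(1/2)) * A * mpow A (-(1/2)) = 1 := by
  nth_rw 2 [← hA.mpow_one]
  rw [← hA.mpow_add, ← hA.mpow_add]
  norm_num [hA.1.mpow_zero]

lemma Matrix.PosDef.mpow_neg_two (hA : A.PosDef) :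
    mpow A (-2) = mpow A (-(1/2)) * mpow A (-(1/2)) * (mpow A (-(1/2)) * mpow A (-(1/2))) := by
  simp only [← hA.mpow_add]
  norm_num

def whiten {d : ℕ} (A X : Mat d) : Mat d := mpow A (-(1/2)) * X * mpow A (-(1/2))

lemma isHermitian_whiten {X : Mat d} (hX : X.IsHermitian) : (whiten A X).IsHermitian := by
  have h := isHermitian_conjTranspose_mul_mul (mpow A (-(1/2))) hX
  rwa [(mpow_isHermitian A _).eq] at h

lemma Matrix.PosDef.not_posSemidef_one_sub_whiten {X : Mat d} (hA : A.PosDef)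
    (h : ¬ (A - X).PosSemidef) : ¬ (1 - whiten A X).PosSemidef := by
  set T := mpow A (-(1/2))
  have hTunit : IsUnit T := IsUnit.of_mul_eq_one_right _ hA.mpow_conj_self
  have hconj : 1 - whiten A X = T * (A - X) * star T := by
    rw [whiten, star_eq_conjTranspose, (mpow_isHermitian A _).eq, mul_sub, sub_mul,
      hA.mpow_conj_self]
  rwa [hconj, hTunit.posSemidef_star_right_conjugate_iff]

lemma Matrix.PosDef.re_trace_whiten_mul_self_le {X : Mat d} (hA : A.PosDef)
    (hX : X.IsHermitian) :
    RCLike.re (whiten A X * whiten A X).trace ≤ (X ^ 2 * mpow A (-2)).trace.re := by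
  rw [sq, hA.mpow_neg_two]
  exact re_trace_conj_mul_self_le hX (mpow_isHermitian A _)

section Expectation

variable {Ω : Type*} [MeasurableSpace Ω] {μ : Measure Ω} {Y : Ω → Mat d}

lemma integrable_trace_mul (hY : ∀ i j, Integrable (fun ω ↦ Y ω i j) μ) (B : Mat d) :
    Integrable (fun ω ↦ (Y ω * B).trace) μ := by
  simp only [trace_mul_eq_sum]
  exact integrable_finsetSum _ fun i _ ↦ integrable_finsetSum _ fun j _ ↦ (hY i j).mul_const _

lemma integral_trace_mul (hY : ∀ i j, Integrable (fun ω ↦ Y ω i j) μ) (B : Mat d) :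
    ∫ ω, (Y ω * B).trace ∂μ = (Emat μ Y * B).trace := by
  simp only [trace_mul_eq_sum]
  rw [integral_finsetSum _ fun i _ ↦ integrable_finsetSum _ fun j _ ↦ (hY i j).mul_const _]
  refine Finset.sum_congr rfl fun i _ ↦ ?_
  rw [integral_finsetSum _ fun j _ ↦ (hY i j).mul_const _]
  exact Finset.sum_congr rfl fun j _ ↦ integral_mul_const _ _

end Expectation

theorem chebyshev_inequality_for_tensors_general {d : ℕ}
    {Ω : Type*} [MeasurableSpace Ω] (μ : Measure Ω) [IsProbabilityMeasure μ]
    (A : Mat d) (hA : A.PosDef) (X : Ω → Mat d)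
    (hherm : ∀ᵐ ω ∂μ, (X ω).IsHermitian)
    (hint : ∀ i j, Integrable (fun ω => (X ω ^ 2) i j) μ) :
    (μ {ω | ¬ (A - X ω).PosSemidef}).toReal ≤
      (Matrix.trace (Emat μ (fun ω => X ω ^ 2) * mpow A (-2))).re := by
  set f : Ω → ℝ := fun ω ↦ (X ω ^ 2 * mpow A (-2)).trace.re
  have hf_int : Integrable f μ := (integrable_trace_mul hint _).re
  have hf_nonneg : 0 ≤ᵐ[μ] f := hherm.mono fun ω hω ↦
    (isHermitian_whiten hω).re_trace_mul_self_nonneg.trans (hA.re_trace_whiten_mul_self_le hω)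
  have hsub : {ω | ¬ (A - X ω).PosSemidef} ≤ᵐ[μ] {ω | 1 ≤ f ω} := hherm.mono fun ω hω hnot ↦
    ((isHermitian_whiten hω).one_lt_re_trace_mul_self
      (hA.not_posSemidef_one_sub_whiten hnot)).le.trans (hA.re_trace_whiten_mul_self_le hω)
  calc (μ {ω | ¬ (A - X ω).PosSemidef}).toReal ≤ μ.real {ω | 1 ≤ f ω} :=
        ENNReal.toReal_mono (measure_ne_top _ _) (measure_mono_ae hsub)
    _ ≤ ∫ ω, f ω ∂μ := by simpa using mul_meas_ge_le_integral_of_nonneg hf_nonneg hf_int 1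
    _ = _ := (integral_re (integrable_trace_mul hint _)).trans
        (congrArg RCLike.re (integral_trace_mul hint _))

/-- **Chebyshev's inequality for tensors** (Theorem 3.3). For a deterministic PD
matrix `A` and a random Hermitian matrix `X` with `X²` having integrable
entries, `ℙ(X ⋠ A) ≤ Tr(𝔼[X²]·A^{-2})`. -/
theorem chebyshev_inequality_for_tensors {d : ℕ} (hd : 1 ≤ d)
    {Ω : Type*} [MeasurableSpace Ω] (μ : Measure Ω) [IsProbabilityMeasure μ]
    (A : Mat d) (hA : A.PosDef) (X : Ω → Mat d)
    (hherm : ∀ᵐ ω ∂μ, (X ω).IsHermitian)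
    (hint : ∀ i j, Integrable (fun ω => (X ω ^ 2) i j) μ) :
    (μ {ω | ¬ (A - X ω).PosSemidef}).toReal ≤
      (Matrix.trace (Emat μ (fun ω => X ω ^ 2) * mpow A (-2))).re :=
  chebyshev_inequality_for_tensors_general μ A hA X hherm hint
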